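/- Let c ≥ 2 and let Φ : 𝒞(ℝ^c) → 𝒞(ℝ^d) be a non-trivial lattice homomorphism. Then the map x ↦ Φ({x}) is injective on ℝ^c, and Φ(∅) is a proper subset of Φ({x}) for every x ∈ ℝ^c; in particular Φ({x}) ≠ ∅ for every x ∈ ℝ^c. -/

import Mathlib

open Set

noncomputable section

/-- Euclidean space `ℝ^n`. -/
abbrev E (n : ℕ) := EuclideanSpace ℝ (Fin n)

/-- A convex body of `ℝ^n`: a compact convex subset (possibly empty). -/
def IsBody {n : ℕ} (C : Set (E n)) : Prop := Convex ℝ C ∧ IsCompact C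

/-- `Φ` represents a lattice homomorphism from `𝒞(ℝ^c)` to `𝒞(ℝ^d)`: it maps convex bodies
to convex bodies, and on convex bodies it preserves intersections (the lattice meet) and
convex hulls of unions (the lattice join). -/
def IsLatHom {c d : ℕ} (Φ : Set (E c) → Set (E d)) : Prop :=
  (∀ C, IsBody C → IsBody (Φ C)) ∧
  ∀ C D : Set (E c), IsBody C → IsBody D →
    Φ (C ∩ D) = Φ C ∩ Φ D ∧ Φ (convexHull ℝ (C ∪ D)) = convexHull ℝ (Φ C ∪ Φ D)

/-- `Φ` is non-trivial: it is not constant on convex bodies. -/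
def NonTrivial {c d : ℕ} (Φ : Set (E c) → Set (E d)) : Prop :=
  ∃ C D : Set (E c), IsBody C ∧ IsBody D ∧ Φ C ≠ Φ D

/-- The closed ray emanating from `o` in direction `u`. -/
def Ray {n : ℕ} (o u : E n) : Set (E n) := {p | ∃ t : ℝ, 0 ≤ t ∧ p = o + t • u}

/-- An affine hyperplane of `ℝ^n`: a nonempty affine subspace of dimension `n - 1`. -/
def IsHyperplane {n : ℕ} (H : AffineSubspace ℝ (E n)) : Prop :=
  (H : Set (E n)).Nonempty ∧ Module.finrank ℝ H.direction + 1 = n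

open scoped Classical in
/-- The dimension of a convex set: the dimension of its affine hull, with `sdim ∅ = -1`. -/
def sdim {n : ℕ} (s : Set (E n)) : ℤ :=
  if s = ∅ then -1 else Module.finrank ℝ (affineSpan ℝ s).direction

/-!
If `Φ {x₀} = Φ ∅` for a single point `x₀`, then the same holds for every other point `w`: with
`y = 2 • w - x₀` the point `w` lies on the segment `[x₀, y]` and `w ≠ y`, so
`Φ {w} ⊆ Φ [x₀, y] = conv (Φ ∅ ∪ Φ {y}) = Φ {y}` while `Φ {w} ∩ Φ {y} = Φ ∅`. Adding
vertices one at a time, `Φ` then sends every polytope to `Φ ∅`, and since every convex body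
lies in a polytope, monotonicity makes `Φ` constant. Injectivity is the same meet computation:
`Φ {x} = Φ {y}` with `x ≠ y` gives `Φ {y} = Φ {x} ∩ Φ {y} = Φ ∅`.
-/

lemma isBody_empty {n : ℕ} : IsBody (∅ : Set (E n)) := ⟨convex_empty, isCompact_empty⟩

lemma isBody_singleton {n : ℕ} (x : E n) : IsBody ({x} : Set (E n)) :=
  ⟨convex_singleton x, isCompact_singleton⟩

lemma Set.Finite.isBody_convexHull {n : ℕ} {F : Set (E n)} (hF : F.Finite) :
    IsBody (convexHull ℝ F) :=
  ⟨convex_convexHull ℝ F, hF.isCompact_convexHull (𝕜 := ℝ)⟩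

lemma IsBody.exists_finset_subset_convexHull {n : ℕ} {C : Set (E n)} (hC : IsBody C) :
    ∃ u : Finset (E n), C ⊆ convexHull ℝ u := by
  obtain ⟨u, hCu, -⟩ :=
    hC.1.exists_subset_interior_convexHull_finset_of_isCompact hC.2 (t := univ) Filter.univ_mem
  exact ⟨u, hCu.trans interior_subset⟩

lemma isBody_segment {n : ℕ} (x y : E n) : IsBody (segment ℝ x y) := by
  rw [← convexHull_pair]
  exact (toFinite {x, y}).isBody_convexHull

namespace IsLatHom

variable {c d : ℕ} {Φ : Set (E c) → Set (E d)}

lemma mono (hΦ : IsLatHom Φ) {C D : Set (E c)} (hC : IsBody C) (hD : IsBody D) (h : C ⊆ D) :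
    Φ C ⊆ Φ D := by
  rw [← inter_eq_left.mpr h, (hΦ.2 C D hC hD).1]
  exact inter_subset_right

lemma map_empty_subset (hΦ : IsLatHom Φ) {C : Set (E c)} (hC : IsBody C) : Φ ∅ ⊆ Φ C :=
  hΦ.mono isBody_empty hC (empty_subset C)

lemma map_singleton_inter_map_singleton (hΦ : IsLatHom Φ) {x y : E c} (hxy : x ≠ y) :
    Φ {x} ∩ Φ {y} = Φ ∅ := by
  rw [← (hΦ.2 {x} {y} (isBody_singleton x) (isBody_singleton y)).1,
    singleton_inter_eq_empty.mpr (mem_singleton_iff.not.mpr hxy)]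

lemma map_segment (hΦ : IsLatHom Φ) (x y : E c) :
    Φ (segment ℝ x y) = convexHull ℝ (Φ {x} ∪ Φ {y}) := by
  rw [← convexHull_pair, ← singleton_union]
  exact (hΦ.2 {x} {y} (isBody_singleton x) (isBody_singleton y)).2

lemma map_singleton_eq_map_empty_of_mem_segment (hΦ : IsLatHom Φ) {x y w : E c}
    (hx : Φ {x} = Φ ∅) (hw : w ∈ segment ℝ x y) (hwy : w ≠ y) : Φ {w} = Φ ∅ := by
  have hseg : Φ (segment ℝ x y) = Φ {y} := by
    rw [hΦ.map_segment, hx,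
      union_eq_self_of_subset_left (hΦ.map_empty_subset (isBody_singleton y)),
      (hΦ.1 {y} (isBody_singleton y)).1.convexHull_eq]
  have hwy_sub : Φ {w} ⊆ Φ {y} :=
    hseg ▸ hΦ.mono (isBody_singleton w) (isBody_segment x y) (singleton_subset_iff.mpr hw)
  rw [← hΦ.map_singleton_inter_map_singleton hwy, inter_eq_left.mpr hwy_sub]

lemma map_singleton_eq_map_empty (hΦ : IsLatHom Φ) {x₀ : E c} (h₀ : Φ {x₀} = Φ ∅)
    (w : E c) : Φ {w} = Φ ∅ := by
  by_cases hw : w = x₀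
  · rwa [hw]
  have hmem : w ∈ segment ℝ x₀ ((2 : ℝ) • w - x₀) :=
    ⟨1 / 2, 1 / 2, by norm_num, by norm_num, by norm_num, by module⟩
  refine hΦ.map_singleton_eq_map_empty_of_mem_segment h₀ hmem fun h => hw ?_
  linear_combination (norm := module) (-1 : ℝ) • h

lemma map_convexHull_eq_map_empty (hΦ : IsLatHom Φ) (hpt : ∀ w : E c, Φ {w} = Φ ∅)
    (u : Finset (E c)) : Φ (convexHull ℝ u) = Φ ∅ := by
  classical
  induction u using Finset.induction_on with
  | empty => simp
  | insert a u _ ih =>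
    rw [Finset.coe_insert, insert_eq, ← convexHull_convexHull_union_right,
      (hΦ.2 {a} _ (isBody_singleton a) u.finite_toSet.isBody_convexHull).2, hpt a, ih,
      union_self, (hΦ.1 ∅ isBody_empty).1.convexHull_eq]

lemma eq_map_empty_of_map_singleton_eq (hΦ : IsLatHom Φ) {x₀ : E c} (h₀ : Φ {x₀} = Φ ∅)
    {C : Set (E c)} (hC : IsBody C) : Φ C = Φ ∅ := by
  obtain ⟨u, hCu⟩ := hC.exists_finset_subset_convexHull
  refine (hΦ.map_empty_subset hC).antisymm' ?_
  calc Φ C ⊆ Φ (convexHull ℝ u) := hΦ.mono hC u.finite_toSet.isBody_convexHull hCu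
    _ = Φ ∅ := hΦ.map_convexHull_eq_map_empty (hΦ.map_singleton_eq_map_empty h₀) u

lemma map_singleton_ne_map_empty (hΦ : IsLatHom Φ) (hnt : NonTrivial Φ) (x : E c) :
    Φ {x} ≠ Φ ∅ := by
  obtain ⟨C, D, hC, hD, hCD⟩ := hnt
  intro hx
  exact hCD ((hΦ.eq_map_empty_of_map_singleton_eq hx hC).trans
    (hΦ.eq_map_empty_of_map_singleton_eq hx hD).symm)

lemma map_empty_ssubset_map_singleton (hΦ : IsLatHom Φ) (hnt : NonTrivial Φ) (x : E c) :
    Φ ∅ ⊂ Φ {x} :=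
  (hΦ.map_empty_subset (isBody_singleton x)).ssubset_of_ne
    (hΦ.map_singleton_ne_map_empty hnt x).symm

lemma injective_map_singleton (hΦ : IsLatHom Φ) (hnt : NonTrivial Φ) :
    Function.Injective fun x : E c => Φ {x} := by
  intro x y hxy
  by_contra hne
  apply hΦ.map_singleton_ne_map_empty hnt y
  rw [← hΦ.map_singleton_inter_map_singleton hne, show Φ {x} = Φ {y} from hxy, inter_self]

end IsLatHom

theorem stmt_9_general (c d : ℕ) (Φ : Set (E c) → Set (E d))
    (hΦ : IsLatHom Φ) (hnt : NonTrivial Φ) :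
    Function.Injective (fun x : E c => Φ {x}) ∧
    (∀ x : E c, Φ (∅ : Set (E c)) ⊂ Φ {x}) ∧
    (∀ x : E c, (Φ ({x} : Set (E c))).Nonempty) :=
  ⟨hΦ.injective_map_singleton hnt, hΦ.map_empty_ssubset_map_singleton hnt,
    fun x => nonempty_of_ssubset' (hΦ.map_empty_ssubset_map_singleton hnt x)⟩

/-- For a non-trivial lattice homomorphism, `x ↦ Φ({x})` is injective, `Φ(∅)` is a proper
subset of each `Φ({x})`, and in particular `Φ({x}) ≠ ∅`. -/
theorem stmt_9 (c d : ℕ) (hc : 2 ≤ c) (Φ : Set (E c) → Set (E d))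
    (hΦ : IsLatHom Φ) (hnt : NonTrivial Φ) :
    Function.Injective (fun x : E c => Φ {x}) ∧
    (∀ x : E c, Φ (∅ : Set (E c)) ⊂ Φ {x}) ∧
    (∀ x : E c, (Φ ({x} : Set (E c))).Nonempty) :=
  stmt_9_general c d Φ hΦ hnt
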